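/- arXiv:2402.08927 — 3 statements merged into one kernel-verified Lean document; each statement's English description precedes it below -/
import Mathlib

section
/- Let p ∈ (0,1), B a nonempty finite set, and f : S^B → ℝ. Let (T, μ) be a finite probability space and for each t ∈ T let J_t be a query map on B. Let X ∼ π_{p,B} be independent of T ∼ μ, and let δ = max_{i∈B} P(i ∈ J_T(X)) be the revealment. Then for every k ∈ {1, …, |B|}: Σ_{A⊆B, |A|=k} ⟨f, Ψ_A^{p,B}⟩_{p,B}² ≤ 2·E[Var_{π_{p,B}}(f_{J_T(X)|X})] + 2k·δ·Var_{π_{p,B}}(f), where Var_{π_{p,B}}(f) denotes the variance of f under π_{p,B}. Equivalently, if f is non-constant with spectral-weight random variable W_{p,f} and predictability ε = E[Var_{π_{p,B}}(f_{J_T(X)|X})]/Var_{π_{p,B}}(f), then P(W_{p,f} = k) ≤ 2ε + 2δk. -/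
open Finset

noncomputable section

/-- ν_p = √((1-p)/p). -/
def nu (p : ℝ) : ℝ := Real.sqrt ((1 - p) / p)

/-- Product Bernoulli measure π_{p,B} on S^B; configurations are `x : B → Bool`
(`true` ↔ +1, `false` ↔ −1). -/
def piB {B : Type*} [Fintype B] (p : ℝ) (x : B → Bool) : ℝ :=
  ∏ i, (if x i then p else 1 - p)

/-- Inner product ⟨f,g⟩_{p,B}. -/
def innB {B : Type*} [Fintype B] [DecidableEq B] (p : ℝ) (f g : (B → Bool) → ℝ) : ℝ :=
  ∑ x : B → Bool, f x * g x * piB p x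

/-- Ψ_A^{p,B}(x) = Π_{i∈A} x_i ν_p^{x_i} (factor ν_p when x_i = +1, −ν_p⁻¹ when x_i = −1). -/
def PsiB {B : Type*} (p : ℝ) (A : Finset B) (x : B → Bool) : ℝ :=
  ∏ i ∈ A, (if x i then nu p else -(nu p)⁻¹)

/-- Expectation under π_{p,B}. -/
def EB {B : Type*} [Fintype B] [DecidableEq B] (p : ℝ) (f : (B → Bool) → ℝ) : ℝ :=
  ∑ x : B → Bool, f x * piB p x

/-- Variance under π_{p,B}. -/
def VarB {B : Type*} [Fintype B] [DecidableEq B] (p : ℝ) (f : (B → Bool) → ℝ) : ℝ :=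
  EB p (fun x => f x ^ 2) - (EB p f) ^ 2

/-- The restriction f_{I|x} : z ↦ f(w), where w agrees with x on I and with z on B∖I. -/
def restrict {B : Type*} [DecidableEq B] (f : (B → Bool) → ℝ) (I : Finset B)
    (x : B → Bool) : (B → Bool) → ℝ :=
  fun z => f (fun j => if j ∈ I then x j else z j)

set_option linter.unusedSectionVars false
namespace SSAux

/-- patch I x z : agrees with x on I, with z off I. -/
def patch {B : Type*} [DecidableEq B] (I : Finset B) (x z : B → Bool) : B → Bool :=
  fun j => if j ∈ I then x j else z j

section Basic

variable {B : Type*} [Fintype B] [DecidableEq B] {p : ℝ}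

lemma restrict_apply (f : (B → Bool) → ℝ) (I : Finset B) (x z : B → Bool) :
    restrict f I x z = f (patch I x z) := rfl

/-- character of a single bit -/
def chiF (p : ℝ) (b : Bool) : ℝ := if b then nu p else -(nu p)⁻¹

def wt (p : ℝ) (b : Bool) : ℝ := if b then p else 1 - p

lemma piB_def (x : B → Bool) : piB p x = ∏ i, wt p (x i) := rfl

lemma PsiB_def (A : Finset B) (x : B → Bool) : PsiB p A x = ∏ i ∈ A, chiF p (x i) := rfl

lemma wt_nonneg (hp0 : 0 < p) (hp1 : p < 1) (b : Bool) : 0 ≤ wt p b := by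
  cases b <;> simp [wt] <;> linarith

lemma piB_nonneg (hp0 : 0 < p) (hp1 : p < 1) (x : B → Bool) : 0 ≤ piB p x :=
  Finset.prod_nonneg fun i _ => wt_nonneg hp0 hp1 (x i)

lemma nu_pos (hp0 : 0 < p) (hp1 : p < 1) : 0 < nu p := by
  apply Real.sqrt_pos.2
  apply div_pos <;> linarith

lemma nu_sq (hp0 : 0 < p) (hp1 : p < 1) : nu p * nu p = (1 - p) / p :=
  Real.mul_self_sqrt (le_of_lt (by apply div_pos <;> linarith : (0:ℝ) < (1-p)/p))

lemma chiF_true : chiF p true = nu p := rfl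
lemma chiF_false : chiF p false = -(nu p)⁻¹ := rfl
lemma wt_true : wt p true = p := rfl
lemma wt_false : wt p false = 1 - p := rfl

lemma nu_sq' (hp0 : 0 < p) (hp1 : p < 1) : p * (nu p * nu p) = 1 - p := by
  rw [nu_sq hp0 hp1]; field_simp

lemma sum_wt_chi_chi (hp0 : 0 < p) (hp1 : p < 1) :
    wt p true * (chiF p true * chiF p true) + wt p false * (chiF p false * chiF p false) = 1 := by
  have hν := nu_pos hp0 hp1
  have hne : nu p ≠ 0 := ne_of_gt hν
  have hp' : p ≠ 0 := ne_of_gt hp0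
  have h1p : (1:ℝ) - p ≠ 0 := by intro h; apply absurd hp1; linarith [h]
  have hsq := nu_sq' hp0 hp1
  rw [chiF_true, chiF_false, wt_true, wt_false]
  have h1 : -(nu p)⁻¹ * -(nu p)⁻¹ = ((nu p)*(nu p))⁻¹ := by
    rw [neg_mul_neg, mul_inv]
  rw [h1]
  field_simp
  nlinarith [hsq]

lemma sum_wt_chi (hp0 : 0 < p) (hp1 : p < 1) :
    wt p true * chiF p true + wt p false * chiF p false = 0 := by
  have hν := nu_pos hp0 hp1
  have hne : nu p ≠ 0 := ne_of_gt hν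
  have hp' : p ≠ 0 := ne_of_gt hp0
  have h1p : (1:ℝ) - p ≠ 0 := by intro h; apply absurd hp1; linarith [h]
  have hsq := nu_sq' hp0 hp1
  rw [chiF_true, chiF_false, wt_true, wt_false]
  have hmul : nu p * (nu p * (p / (1 - p))) = 1 := by
    field_simp
    nlinarith [hsq]
  rw [(eq_inv_of_mul_eq_one_right hmul).symm]
  field_simp
  ring

/-- master product-sum swap -/
lemma sum_prod_swap (w : B → Bool → ℝ) :
    (∑ x : B → Bool, ∏ i, w i (x i)) = ∏ i, (w i true + w i false) := by
  rw [← Fintype.prod_sum]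
  congr 1; ext i
  simp [Fintype.sum_bool]

/-- orthonormality -/
lemma PsiB_univ_ite (A : Finset B) (x : B → Bool) :
    PsiB p A x = ∏ i, (if i ∈ A then chiF p (x i) else 1) := by
  rw [PsiB_def, Finset.prod_ite_mem, Finset.univ_inter]

lemma orthon (hp0 : 0 < p) (hp1 : p < 1) (A A' : Finset B) :
    (∑ x : B → Bool, PsiB p A x * PsiB p A' x * piB p x)
      = if A = A' then 1 else 0 := by
  have key : ∀ x : B → Bool, PsiB p A x * PsiB p A' x * piB p x
      = ∏ i, ((if i ∈ A then chiF p (x i) else 1) * (if i ∈ A' then chiF p (x i) else 1)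
          * wt p (x i)) := by
    intro x
    rw [PsiB_univ_ite, PsiB_univ_ite, piB_def, ← Finset.prod_mul_distrib,
      ← Finset.prod_mul_distrib]
  rw [Finset.sum_congr rfl fun x _ => key x]
  rw [sum_prod_swap (fun i b => (if i ∈ A then chiF p b else 1) * (if i ∈ A' then chiF p b else 1)
      * wt p b)]
  by_cases h : A = A'
  · subst h
    rw [if_pos rfl]
    apply Finset.prod_eq_one
    intro i _
    by_cases hi : i ∈ A
    · simp only [if_pos hi]
      linear_combination (sum_wt_chi_chi hp0 hp1)
    · simp only [if_neg hi, one_mul]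
      rw [wt_true, wt_false]; ring
  · rw [if_neg h]
    obtain ⟨i, hi⟩ : ∃ i, ¬(i ∈ A ↔ i ∈ A') := by
      by_contra hc
      push_neg at hc
      exact h (Finset.ext fun i => (hc i))
  
    apply Finset.prod_eq_zero (Finset.mem_univ i)
    by_cases hiA : i ∈ A <;> by_cases hiA' : i ∈ A'
    · exact absurd (iff_of_true hiA hiA') hi
    · simp only [if_pos hiA, if_neg hiA', mul_one]
      linear_combination (sum_wt_chi hp0 hp1)
    · simp only [if_neg hiA, if_pos hiA', one_mul]
      linear_combination (sum_wt_chi hp0 hp1)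
    · exact absurd (iff_of_false hiA hiA') hi

lemma sum_piB (hp0 : 0 < p) (hp1 : p < 1) :
    (∑ x : B → Bool, piB p x) = 1 := by
  have := orthon (B := B) hp0 hp1 ∅ ∅
  simpa [PsiB] using this

lemma EB_PsiB (hp0 : 0 < p) (hp1 : p < 1) (A : Finset B) :
    (∑ x : B → Bool, PsiB p A x * piB p x) = if A = ∅ then 1 else 0 := by
  have := orthon (B := B) hp0 hp1 A ∅
  simpa [PsiB] using this

/-- Psi splits across a set I -/
lemma PsiB_patch (A I : Finset B) (x z : B → Bool) :
    PsiB p A (patch I x z) = PsiB p (A ∩ I) x * PsiB p (A \ I) z := by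
  have hdisj : Disjoint (A ∩ I) (A \ I) := by
    rw [Finset.disjoint_left]
    intro i hi hi'
    exact (Finset.mem_sdiff.1 hi').2 (Finset.mem_inter.1 hi).2
  have hsplit : A = (A ∩ I) ∪ (A \ I) := by
    rw [Finset.union_comm]
    exact (Finset.sdiff_union_inter A I).symm
  rw [PsiB_def]
  conv_lhs => rw [hsplit]
  rw [Finset.prod_union hdisj, PsiB_def, PsiB_def]
  congr 1
  · apply Finset.prod_congr rfl
    intro i hi
    have : i ∈ I := (Finset.mem_inter.1 hi).2
    simp [patch, this]
  · apply Finset.prod_congr rfl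
    intro i hi
    have : i ∉ I := (Finset.mem_sdiff.1 hi).2
    simp [patch, this]

end Basic

section Proj

variable {B : Type*} [Fintype B] [DecidableEq B] {p : ℝ}
variable (K : (B → Bool) → Finset B)

/-- conditional expectation given the revealed bits -/
def Pop (p : ℝ) (K : (B → Bool) → Finset B) (u : (B → Bool) → ℝ) (x : B → Bool) : ℝ :=
  ∑ z : B → Bool, u (patch (K x) x z) * piB p z

lemma Pop_eq_EB_restrict (u : (B → Bool) → ℝ) (x : B → Bool) :
    Pop p K u x = EB p (restrict u (K x) x) := rfl


lemma patch_mem (I : Finset B) (x z : B → Bool) {j : B} (hj : j ∈ I) :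
    patch I x z j = x j := if_pos hj

lemma patch_not_mem (I : Finset B) (x z : B → Bool) {j : B} (hj : j ∉ I) :
    patch I x z j = z j := if_neg hj

variable (hK : ∀ x z, K (patch (K x) x z) = K x)

include hK in
lemma patchA (x z : B → Bool) :
    patch (K (patch (K x) x z)) (patch (K x) x z) (patch (K x) z x) = x := by
  rw [hK]
  funext j
  by_cases hj : j ∈ K x
  · rw [patch_mem _ _ _ hj, patch_mem _ _ _ hj]
  · rw [patch_not_mem _ _ _ hj, patch_not_mem _ _ _ hj]

include hK in
lemma patchB (x z : B → Bool) :
    patch (K (patch (K x) x z)) (patch (K x) z x) (patch (K x) x z) = z := by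
  rw [hK]
  funext j
  by_cases hj : j ∈ K x
  · rw [patch_mem _ _ _ hj, patch_mem _ _ _ hj]
  · rw [patch_not_mem _ _ _ hj, patch_not_mem _ _ _ hj]

lemma piB_pair (x z : B → Bool) :
    piB p (patch (K x) x z) * piB p (patch (K x) z x) = piB p x * piB p z := by
  rw [piB_def, piB_def, piB_def, piB_def, ← Finset.prod_mul_distrib,
    ← Finset.prod_mul_distrib]
  apply Finset.prod_congr rfl
  intro i _
  by_cases hi : i ∈ K x
  · rw [patch_mem _ _ _ hi, patch_mem _ _ _ hi]
  · rw [patch_not_mem _ _ _ hi, patch_not_mem _ _ _ hi]; ring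

include hK in
/-- self-adjointness of Pop -/
lemma inn_Pop_left (u v : (B → Bool) → ℝ) :
    innB p (Pop p K u) v = innB p u (Pop p K v) := by
  have lhs_eq : innB p (Pop p K u) v
      = ∑ q : (B → Bool) × (B → Bool),
          u (patch (K q.1) q.1 q.2) * v q.1 * (piB p q.1 * piB p q.2) := by
    rw [Fintype.sum_prod_type]
    unfold innB Pop
    apply Finset.sum_congr rfl
    intro x _
    rw [Finset.sum_mul, Finset.sum_mul]
    apply Finset.sum_congr rfl
    intro z _
    ring
  have rhs_eq : innB p u (Pop p K v)
      = ∑ q : (B → Bool) × (B → Bool),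
          u q.1 * v (patch (K q.1) q.1 q.2) * (piB p q.1 * piB p q.2) := by
    rw [Fintype.sum_prod_type]
    unfold innB Pop
    apply Finset.sum_congr rfl
    intro x _
    rw [Finset.mul_sum, Finset.sum_mul]
    apply Finset.sum_congr rfl
    intro z _
    ring
  rw [lhs_eq, rhs_eq]
  have einv : Function.Involutive
      (fun q : (B → Bool) × (B → Bool) =>
        ((patch (K q.1) q.1 q.2, patch (K q.1) q.2 q.1) : (B → Bool) × (B → Bool))) := by
    intro q
    have h1 := patchA K hK q.1 q.2
    have h2 := patchB K hK q.1 q.2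
    simp only at h1 h2 ⊢
    rw [h1, h2]
  let e := einv.toPerm
  rw [← Equiv.sum_comp e
    (fun q : (B → Bool) × (B → Bool) =>
      u q.1 * v (patch (K q.1) q.1 q.2) * (piB p q.1 * piB p q.2))]
  apply Finset.sum_congr rfl
  intro q _
  show u (patch (K q.1) q.1 q.2) * v q.1 * (piB p q.1 * piB p q.2)
      = u (patch (K q.1) q.1 q.2)
        * v (patch (K (patch (K q.1) q.1 q.2)) (patch (K q.1) q.1 q.2) (patch (K q.1) q.2 q.1))
        * (piB p (patch (K q.1) q.1 q.2) * piB p (patch (K q.1) q.2 q.1))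
  rw [patchA K hK, piB_pair K]

include hK in
lemma Pop_patch (u : (B → Bool) → ℝ) (x z : B → Bool) :
    Pop p K u (patch (K x) x z) = Pop p K u x := by
  unfold Pop
  rw [hK]
  apply Finset.sum_congr rfl
  intro z' _
  congr 2
  funext j
  by_cases hj : j ∈ K x
  · rw [patch_mem _ _ _ hj, patch_mem _ _ _ hj, patch_mem _ _ _ hj]
  · rw [patch_not_mem _ _ _ hj, patch_not_mem _ _ _ hj]

lemma Pop_one (hp0 : 0 < p) (hp1 : p < 1) (x : B → Bool) :
    Pop p K (fun _ => 1) x = 1 := by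
  unfold Pop
  simpa using sum_piB (B := B) hp0 hp1

end Proj


section KL

variable {B : Type*} [Fintype B] [DecidableEq B] {p : ℝ}

/-- sets of size k -/
def filt (B : Type*) [Fintype B] [DecidableEq B] (k : ℕ) : Finset (Finset B) :=
  Finset.univ.filter (fun A : Finset B => A.card = k)

def gfun (p : ℝ) (k : ℕ) (c : Finset B → ℝ) : (B → Bool) → ℝ :=
  fun x => ∑ A ∈ filt B k, c A * PsiB p A x

def gam (p : ℝ) (K : (B → Bool) → Finset B) (k : ℕ) (c : Finset B → ℝ)
    (x : B → Bool) (V : Finset B) : ℝ :=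
  ∑ A ∈ (filt B k).filter (fun A => A \ K x = V), c A * PsiB p (A ∩ K x) x

/-- grouping of a diagonal double sum into fiber squares -/
lemma group_sq {ι κ : Type*} [DecidableEq κ] [Fintype κ] (s : Finset ι)
    (m : ι → κ) (F : ι → ℝ) :
    ∑ A ∈ s, ∑ A' ∈ s, (F A * F A' * if m A = m A' then 1 else 0)
      = ∑ V : κ, (∑ A ∈ s.filter (fun A => m A = V), F A)^2 := by
  have inner : ∀ A A' : ι,
      (∑ V : κ, (if m A = V then F A else 0) * (if m A' = V then F A' else 0))
        = F A * F A' * if m A = m A' then 1 else 0 := by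
    intro A A'
    by_cases h : m A = m A'
    · rw [if_pos h, mul_one]
      rw [Finset.sum_eq_single (m A)]
      · rw [if_pos rfl, if_pos h.symm]
      · intro b _ hb
        rw [if_neg (fun hh => hb hh.symm), zero_mul]
      · intro hb
        exact absurd (Finset.mem_univ _) hb
    · rw [if_neg h, mul_zero]
      apply Finset.sum_eq_zero
      intro V _
      by_cases h1 : m A = V
      · by_cases h2 : m A' = V
        · exact absurd (h1.trans h2.symm) h
        · rw [if_neg h2, mul_zero]
      · rw [if_neg h1, zero_mul]
  calc ∑ A ∈ s, ∑ A' ∈ s, (F A * F A' * if m A = m A' then 1 else 0)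
      = ∑ A ∈ s, ∑ A' ∈ s, ∑ V : κ,
          (if m A = V then F A else 0) * (if m A' = V then F A' else 0) := by
        apply Finset.sum_congr rfl; intro A _
        apply Finset.sum_congr rfl; intro A' _
        exact (inner A A').symm
    _ = ∑ V : κ, ∑ A ∈ s, ∑ A' ∈ s,
          (if m A = V then F A else 0) * (if m A' = V then F A' else 0) := by
        rw [Finset.sum_congr rfl (fun A _ => Finset.sum_comm (s := s) (t := Finset.univ)
          (f := fun A' V => (if m A = V then F A else 0) * (if m A' = V then F A' else 0)))]
        exact Finset.sum_comm (s := s) (t := Finset.univ)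
          (f := fun A V => ∑ A' ∈ s, (if m A = V then F A else 0) * (if m A' = V then F A' else 0))
    _ = ∑ V : κ, (∑ A ∈ s.filter (fun A => m A = V), F A)^2 := by
        apply Finset.sum_congr rfl; intro V _
        have hfil : ∀ G : ι → ℝ, (∑ A ∈ s.filter (fun A => m A = V), G A)
            = ∑ A ∈ s, (if m A = V then G A else 0) := fun G => Finset.sum_filter _ _
        calc ∑ A ∈ s, ∑ A' ∈ s, (if m A = V then F A else 0) * (if m A' = V then F A' else 0)
            = (∑ A ∈ s, if m A = V then F A else 0)
              * (∑ A' ∈ s, if m A' = V then F A' else 0) := (Finset.sum_mul_sum _ _ _ _).symm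
          _ = (∑ A ∈ s.filter (fun A => m A = V), F A)^2 := by rw [sq, hfil]
    
lemma norm_g (hp0 : 0 < p) (hp1 : p < 1) (k : ℕ) (c : Finset B → ℝ) :
    innB p (gfun p k c) (gfun p k c) = ∑ A ∈ filt B k, (c A)^2 := by
  unfold innB gfun
  calc ∑ x : B → Bool, (∑ A ∈ filt B k, c A * PsiB p A x)
        * (∑ A' ∈ filt B k, c A' * PsiB p A' x) * piB p x
      = ∑ x : B → Bool, ∑ A ∈ filt B k, ∑ A' ∈ filt B k,
          c A * c A' * (PsiB p A x * PsiB p A' x * piB p x) := by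
        apply Finset.sum_congr rfl; intro x _
        rw [Finset.sum_mul_sum, Finset.sum_mul]
        apply Finset.sum_congr rfl; intro A _
        rw [Finset.sum_mul]
        apply Finset.sum_congr rfl; intro A' _
        ring
    _ = ∑ A ∈ filt B k, ∑ A' ∈ filt B k,
          c A * c A' * (∑ x : B → Bool, PsiB p A x * PsiB p A' x * piB p x) := by
        rw [Finset.sum_comm (s := Finset.univ) (t := filt B k)]
        apply Finset.sum_congr rfl; intro A _
        rw [Finset.sum_comm (s := Finset.univ) (t := filt B k)]
        apply Finset.sum_congr rfl; intro A' _
        rw [Finset.mul_sum]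
    _ = ∑ A ∈ filt B k, ∑ A' ∈ filt B k,
          c A * c A' * (if A = A' then 1 else 0) := by
        apply Finset.sum_congr rfl; intro A _
        apply Finset.sum_congr rfl; intro A' _
        rw [orthon hp0 hp1]
    _ = ∑ A ∈ filt B k, (c A)^2 := by
        apply Finset.sum_congr rfl; intro A hA
        rw [Finset.sum_eq_single A]
        · rw [if_pos rfl, mul_one, sq]
        · intro A' _ hA'
          rw [if_neg (fun hh => hA' hh.symm), mul_zero]
        · intro hA'
          exact absurd hA hA'

lemma inn_f_g (k : ℕ) (f : (B → Bool) → ℝ) :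
    innB p f (gfun p k (fun A => innB p f (PsiB p A)))
      = ∑ A ∈ filt B k, (innB p f (PsiB p A))^2 := by
  unfold innB gfun
  calc ∑ x : B → Bool, f x * (∑ A ∈ filt B k,
          (∑ y : B → Bool, f y * PsiB p A y * piB p y) * PsiB p A x) * piB p x
      = ∑ x : B → Bool, ∑ A ∈ filt B k,
          (∑ y : B → Bool, f y * PsiB p A y * piB p y) * (f x * PsiB p A x * piB p x) := by
        apply Finset.sum_congr rfl; intro x _
        rw [Finset.mul_sum, Finset.sum_mul]
        apply Finset.sum_congr rfl; intro A _
        ring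
    _ = ∑ A ∈ filt B k, (∑ y : B → Bool, f y * PsiB p A y * piB p y)
          * (∑ x : B → Bool, f x * PsiB p A x * piB p x) := by
        rw [Finset.sum_comm (s := Finset.univ) (t := filt B k)]
        apply Finset.sum_congr rfl; intro A _
        rw [Finset.mul_sum]
    _ = ∑ A ∈ filt B k, (∑ y : B → Bool, f y * PsiB p A y * piB p y)^2 := by
        apply Finset.sum_congr rfl; intro A _
        rw [sq]

lemma Pop_gfun (hp0 : 0 < p) (hp1 : p < 1) (K : (B → Bool) → Finset B)
    (k : ℕ) (c : Finset B → ℝ) (x : B → Bool) :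
    Pop p K (gfun p k c) x = gam p K k c x ∅ := by
  unfold Pop gfun gam
  calc ∑ z : B → Bool, (∑ A ∈ filt B k, c A * PsiB p A (patch (K x) x z)) * piB p z
      = ∑ z : B → Bool, ∑ A ∈ filt B k,
          c A * PsiB p (A ∩ K x) x * (PsiB p (A \ K x) z * piB p z) := by
        apply Finset.sum_congr rfl; intro z _
        rw [Finset.sum_mul]
        apply Finset.sum_congr rfl; intro A _
        rw [PsiB_patch]
        ring
    _ = ∑ A ∈ filt B k, c A * PsiB p (A ∩ K x) x
          * (∑ z : B → Bool, PsiB p (A \ K x) z * piB p z) := by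
        rw [Finset.sum_comm (s := Finset.univ) (t := filt B k)]
        apply Finset.sum_congr rfl; intro A _
        rw [Finset.mul_sum]
    _ = ∑ A ∈ filt B k, c A * PsiB p (A ∩ K x) x * (if A \ K x = ∅ then 1 else 0) := by
        apply Finset.sum_congr rfl; intro A _
        rw [EB_PsiB hp0 hp1]
    _ = ∑ A ∈ (filt B k).filter (fun A => A \ K x = ∅), c A * PsiB p (A ∩ K x) x := by
        rw [Finset.sum_filter]
        apply Finset.sum_congr rfl; intro A _
        by_cases h : A \ K x = ∅
        · rw [if_pos h, if_pos h, mul_one]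
        · rw [if_neg h, if_neg h, mul_zero]

lemma parseval_x (hp0 : 0 < p) (hp1 : p < 1) (K : (B → Bool) → Finset B)
    (k : ℕ) (c : Finset B → ℝ) (x : B → Bool) :
    (∑ z : B → Bool, (gfun p k c (patch (K x) x z))^2 * piB p z)
      = ∑ V : Finset B, (gam p K k c x V)^2 := by
  have expand : ∀ z, gfun p k c (patch (K x) x z)
      = ∑ A ∈ filt B k, (c A * PsiB p (A ∩ K x) x) * PsiB p (A \ K x) z := by
    intro z
    unfold gfun
    apply Finset.sum_congr rfl; intro A _
    rw [PsiB_patch]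
    ring
  calc ∑ z : B → Bool, (gfun p k c (patch (K x) x z))^2 * piB p z
      = ∑ z : B → Bool, ∑ A ∈ filt B k, ∑ A' ∈ filt B k,
          (c A * PsiB p (A ∩ K x) x) * (c A' * PsiB p (A' ∩ K x) x)
            * (PsiB p (A \ K x) z * PsiB p (A' \ K x) z * piB p z) := by
        apply Finset.sum_congr rfl; intro z _
        rw [expand z, sq, Finset.sum_mul_sum, Finset.sum_mul]
        apply Finset.sum_congr rfl; intro A _
        rw [Finset.sum_mul]
        apply Finset.sum_congr rfl; intro A' _
        ring
    _ = ∑ A ∈ filt B k, ∑ A' ∈ filt B k,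
          (c A * PsiB p (A ∩ K x) x) * (c A' * PsiB p (A' ∩ K x) x)
            * (∑ z : B → Bool, PsiB p (A \ K x) z * PsiB p (A' \ K x) z * piB p z) := by
        rw [Finset.sum_comm (s := Finset.univ) (t := filt B k)]
        apply Finset.sum_congr rfl; intro A _
        rw [Finset.sum_comm (s := Finset.univ) (t := filt B k)]
        apply Finset.sum_congr rfl; intro A' _
        rw [Finset.mul_sum]
    _ = ∑ A ∈ filt B k, ∑ A' ∈ filt B k,
          ((fun A => c A * PsiB p (A ∩ K x) x) A) * ((fun A => c A * PsiB p (A ∩ K x) x) A')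
            * (if (fun A => A \ K x) A = (fun A => A \ K x) A' then 1 else 0) := by
        apply Finset.sum_congr rfl; intro A _
        apply Finset.sum_congr rfl; intro A' _
        rw [orthon hp0 hp1]
    _ = ∑ V : Finset B, (gam p K k c x V)^2 := by
        rw [group_sq (filt B k) (fun A => A \ K x) (fun A => c A * PsiB p (A ∩ K x) x)]
        rfl

lemma gam_top (K : (B → Bool) → Finset B) (k : ℕ) (c : Finset B → ℝ)
    (x : B → Bool) {V : Finset B} (hV : V ∈ filt B k) :
    gam p K k c x V = if V ∩ K x = ∅ then c V else 0 := by
  have hVk : V.card = k := (Finset.mem_filter.1 hV).2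
  have key : ∀ A, A ∈ (filt B k).filter (fun A => A \ K x = V)
      ↔ (A = V ∧ V ∩ K x = ∅) := by
    intro A
    constructor
    · intro hA
      obtain ⟨hA1, hA2⟩ := Finset.mem_filter.1 hA
      have hAk : A.card = k := (Finset.mem_filter.1 hA1).2
      have hsub : A \ K x ⊆ A := Finset.sdiff_subset
      have hcard : A.card ≤ (A \ K x).card := by rw [hA2, hVk, hAk]
      have hAA : A \ K x = A := Finset.eq_of_subset_of_card_le hsub hcard
      have hAV : A = V := by rw [← hA2, hAA]
      subst hAV
      constructor
      · rfl
      · rw [Finset.sdiff_eq_self_iff_disjoint] at hAA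
        exact Finset.disjoint_iff_inter_eq_empty.1 hAA
    · rintro ⟨rfl, hdisj⟩
      apply Finset.mem_filter.2
      refine ⟨hV, ?_⟩
      rw [Finset.sdiff_eq_self_iff_disjoint]
      exact Finset.disjoint_iff_inter_eq_empty.2 hdisj
  by_cases hd : V ∩ K x = ∅
  · rw [if_pos hd]
    unfold gam
    have : (filt B k).filter (fun A => A \ K x = V) = {V} := by
      apply Finset.ext
      intro A
      rw [key A, Finset.mem_singleton]
      exact ⟨fun h => h.1, fun h => ⟨h, hd⟩⟩
    rw [this, Finset.sum_singleton, hd]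
    simp [PsiB]
  · rw [if_neg hd]
    unfold gam
    have : (filt B k).filter (fun A => A \ K x = V) = ∅ := by
      apply Finset.ext
      intro A
      rw [key A]
      simp only [Finset.notMem_empty, iff_false]
      rintro ⟨_, h⟩
      exact hd h
    rw [this, Finset.sum_empty]

lemma inn_self_nonneg (hp0 : 0 < p) (hp1 : p < 1) (u : (B → Bool) → ℝ) :
    0 ≤ innB p u u := by
  apply Finset.sum_nonneg
  intro x _
  have : u x * u x * piB p x = (u x)^2 * piB p x := by ring
  rw [this]
  exact mul_nonneg (sq_nonneg _) (piB_nonneg hp0 hp1 x)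

/-- weighted Cauchy-Schwarz -/
lemma inn_sq_le (hp0 : 0 < p) (hp1 : p < 1) (u v : (B → Bool) → ℝ) :
    (innB p u v)^2 ≤ innB p u u * innB p v v := by
  have key := Finset.sum_mul_sq_le_sq_mul_sq Finset.univ
    (fun x : B → Bool => u x * Real.sqrt (piB p x))
    (fun x : B → Bool => v x * Real.sqrt (piB p x))
  have e1 : ∀ x : B → Bool, (u x * Real.sqrt (piB p x)) * (v x * Real.sqrt (piB p x))
      = u x * v x * piB p x := by
    intro x
    have : Real.sqrt (piB p x) * Real.sqrt (piB p x) = piB p x :=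
      Real.mul_self_sqrt (piB_nonneg hp0 hp1 x)
    calc (u x * Real.sqrt (piB p x)) * (v x * Real.sqrt (piB p x))
        = u x * v x * (Real.sqrt (piB p x) * Real.sqrt (piB p x)) := by ring
      _ = u x * v x * piB p x := by rw [this]
  have e2 : ∀ w : (B → Bool) → ℝ, ∀ x : B → Bool, (w x * Real.sqrt (piB p x))^2
      = w x * w x * piB p x := by
    intro w x
    have : Real.sqrt (piB p x) * Real.sqrt (piB p x) = piB p x :=
      Real.mul_self_sqrt (piB_nonneg hp0 hp1 x)
    calc (w x * Real.sqrt (piB p x))^2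
        = w x * w x * (Real.sqrt (piB p x) * Real.sqrt (piB p x)) := by ring
      _ = w x * w x * piB p x := by rw [this]
  rw [Finset.sum_congr rfl (fun x _ => e1 x)] at key
  rw [Finset.sum_congr rfl (fun x _ => e2 u x)] at key
  rw [Finset.sum_congr rfl (fun x _ => e2 v x)] at key
  exact key

lemma inn_le_sqrt (hp0 : 0 < p) (hp1 : p < 1) (u v : (B → Bool) → ℝ) :
    innB p u v ≤ Real.sqrt (innB p u u) * Real.sqrt (innB p v v) := by
  have h2 := inn_sq_le hp0 hp1 u v
  calc innB p u v ≤ |innB p u v| := le_abs_self _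
    _ = Real.sqrt ((innB p u v)^2) := (Real.sqrt_sq_eq_abs _).symm
    _ ≤ Real.sqrt (innB p u u * innB p v v) := Real.sqrt_le_sqrt h2
    _ = Real.sqrt (innB p u u) * Real.sqrt (innB p v v) :=
        Real.sqrt_mul (inn_self_nonneg hp0 hp1 u) _

/-- THE KEY LEMMA (Schramm–Steif for subcube partitions). -/
lemma keyLemma (hp0 : 0 < p) (hp1 : p < 1) (K : (B → Bool) → Finset B)
    (hK : ∀ x z, K (patch (K x) x z) = K x)
    (k : ℕ) (hk1 : 1 ≤ k) (c : Finset B → ℝ) :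
    innB p (Pop p K (gfun p k c)) (Pop p K (gfun p k c))
      + ∑ A ∈ filt B k, (c A)^2 *
          (∑ x : B → Bool, piB p x * (if A ∩ K x = ∅ then 1 else 0))
      ≤ ∑ A ∈ filt B k, (c A)^2 := by
  set g := gfun p k c with hg
  -- total norm identity
  have step2 : innB p g g
      = ∑ x : B → Bool, (∑ z : B → Bool, (g (patch (K x) x z))^2 * piB p z) * piB p x := by
    have gsq : ∀ x, (∑ z : B → Bool, (g (patch (K x) x z))^2 * piB p z)
        = Pop p K (fun y => g y * g y) x := by
      intro x
      unfold Pop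
      apply Finset.sum_congr rfl; intro z _
      ring
    rw [Finset.sum_congr rfl (fun x _ => by rw [gsq x] :
      ∀ x ∈ Finset.univ, (∑ z : B → Bool, (g (patch (K x) x z))^2 * piB p z) * piB p x
        = Pop p K (fun y => g y * g y) x * piB p x)]
    have t1 : innB p (Pop p K (fun y => g y * g y)) (fun _ => 1)
        = innB p (fun y => g y * g y) (Pop p K (fun _ => 1)) := inn_Pop_left K hK _ _
    have t2 : innB p (fun y => g y * g y) (Pop p K (fun _ => 1))
        = innB p g g := by
      unfold innB
      apply Finset.sum_congr rfl; intro x _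
      rw [Pop_one K hp0 hp1 x]
      ring
    have t3 : innB p (Pop p K (fun y => g y * g y)) (fun _ => 1)
        = ∑ x : B → Bool, Pop p K (fun y => g y * g y) x * piB p x := by
      unfold innB
      apply Finset.sum_congr rfl; intro x _
      ring
    rw [← t3, t1, t2]
  -- pointwise lower bound after dropping intermediate V's
  have step3 : ∀ x : B → Bool,
      (Pop p K g x)^2 + ∑ A ∈ filt B k, (c A)^2 * (if A ∩ K x = ∅ then 1 else 0)
        ≤ ∑ z : B → Bool, (g (patch (K x) x z))^2 * piB p z := by
    intro x
    rw [parseval_x hp0 hp1 K k c x]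
    have hne : ∅ ∉ filt B k := by
      intro h
      have := (Finset.mem_filter.1 h).2
      rw [Finset.card_empty] at this
      omega
    have hsub : insert ∅ (filt B k) ⊆ Finset.univ := Finset.subset_univ _
    have hmono : ∑ V ∈ insert ∅ (filt B k), (gam p K k c x V)^2
        ≤ ∑ V : Finset B, (gam p K k c x V)^2 :=
      Finset.sum_le_sum_of_subset_of_nonneg hsub (fun V _ _ => sq_nonneg _)
    rw [Finset.sum_insert hne] at hmono
    refine le_trans (le_of_eq ?_) hmono
    congr 1
    · rw [Pop_gfun hp0 hp1 K k c x]
    · apply Finset.sum_congr rfl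
      intro V hV
      rw [gam_top K k c x hV]
      by_cases hd : V ∩ K x = ∅
      · rw [if_pos hd, if_pos hd, mul_one]
      · rw [if_neg hd, if_neg hd, mul_zero]
        exact (zero_pow two_ne_zero).symm
  -- integrate
  have step4 : ∑ x : B → Bool,
      ((Pop p K g x)^2 + ∑ A ∈ filt B k, (c A)^2 * (if A ∩ K x = ∅ then 1 else 0)) * piB p x
      ≤ innB p g g := by
    rw [step2]
    apply Finset.sum_le_sum
    intro x _
    exact mul_le_mul_of_nonneg_right (step3 x) (piB_nonneg hp0 hp1 x)
  rw [norm_g hp0 hp1 k c] at step4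
  refine le_trans (le_of_eq ?_) step4
  rw [Finset.sum_congr rfl (fun x _ => add_mul _ _ _ :
    ∀ x ∈ Finset.univ,
      ((Pop p K g x)^2 + ∑ A ∈ filt B k, (c A)^2 * (if A ∩ K x = ∅ then 1 else 0)) * piB p x
      = (Pop p K g x)^2 * piB p x
        + (∑ A ∈ filt B k, (c A)^2 * (if A ∩ K x = ∅ then 1 else 0)) * piB p x)]
  rw [Finset.sum_add_distrib]
  congr 1
  · unfold innB
    apply Finset.sum_congr rfl; intro x _
    ring
  · calc ∑ A ∈ filt B k, (c A)^2 * ∑ x : B → Bool, piB p x * (if A ∩ K x = ∅ then 1 else 0)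
        = ∑ A ∈ filt B k, ∑ x : B → Bool,
            (c A)^2 * (if A ∩ K x = ∅ then 1 else 0) * piB p x := by
          apply Finset.sum_congr rfl; intro A _
          rw [Finset.mul_sum]
          apply Finset.sum_congr rfl; intro x _
          ring
      _ = ∑ x : B → Bool, ∑ A ∈ filt B k,
            (c A)^2 * (if A ∩ K x = ∅ then 1 else 0) * piB p x := Finset.sum_comm
      _ = ∑ x : B → Bool, (∑ A ∈ filt B k,
            (c A)^2 * (if A ∩ K x = ∅ then 1 else 0)) * piB p x := by
          apply Finset.sum_congr rfl; intro x _
          rw [Finset.sum_mul]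

lemma Pop_idem (hp0 : 0 < p) (hp1 : p < 1) (K : (B → Bool) → Finset B)
    (hK : ∀ x z, K (patch (K x) x z) = K x) (u : (B → Bool) → ℝ) :
    Pop p K (Pop p K u) = Pop p K u := by
  funext x
  show ∑ z : B → Bool, Pop p K u (patch (K x) x z) * piB p z = Pop p K u x
  rw [Finset.sum_congr rfl (fun z _ => by rw [Pop_patch K hK u x z] :
    ∀ z ∈ Finset.univ, Pop p K u (patch (K x) x z) * piB p z = Pop p K u x * piB p z)]
  rw [← Finset.mul_sum, sum_piB hp0 hp1, mul_one]

lemma int_Pop (hp0 : 0 < p) (hp1 : p < 1) (K : (B → Bool) → Finset B)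
    (hK : ∀ x z, K (patch (K x) x z) = K x) (u : (B → Bool) → ℝ) :
    ∑ x : B → Bool, Pop p K u x * piB p x = ∑ x : B → Bool, u x * piB p x := by
  have t1 : innB p (Pop p K u) (fun _ => 1) = innB p u (Pop p K (fun _ => 1)) :=
    inn_Pop_left K hK _ _
  have t2 : innB p (Pop p K u) (fun _ => 1) = ∑ x : B → Bool, Pop p K u x * piB p x := by
    unfold innB; apply Finset.sum_congr rfl; intro x _; ring
  have t3 : innB p u (Pop p K (fun _ => 1)) = ∑ x : B → Bool, u x * piB p x := by
    unfold innB; apply Finset.sum_congr rfl; intro x _; rw [Pop_one K hp0 hp1 x]; ring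
  rw [← t2, t1, t3]

lemma inn_expand_sub (u v : (B → Bool) → ℝ) :
    innB p (fun x => u x - v x) (fun x => u x - v x)
      = innB p u u - 2 * innB p u v + innB p v v := by
  unfold innB
  rw [Finset.sum_congr rfl (fun x _ => by ring :
    ∀ x ∈ Finset.univ, (u x - v x) * (u x - v x) * piB p x
      = u x * u x * piB p x - 2 * (u x * v x * piB p x) + v x * v x * piB p x)]
  rw [Finset.sum_add_distrib, Finset.sum_sub_distrib, ← Finset.mul_sum]

lemma inn_f_Pop_f (hp0 : 0 < p) (hp1 : p < 1) (K : (B → Bool) → Finset B)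
    (hK : ∀ x z, K (patch (K x) x z) = K x) (f : (B → Bool) → ℝ) :
    innB p f (Pop p K f) = innB p (Pop p K f) (Pop p K f) := by
  have h := inn_Pop_left (p := p) K hK f (Pop p K f)
  rw [Pop_idem hp0 hp1 K hK f] at h
  exact h.symm

lemma a_eq (hp0 : 0 < p) (hp1 : p < 1) (K : (B → Bool) → Finset B)
    (hK : ∀ x z, K (patch (K x) x z) = K x) (f : (B → Bool) → ℝ) :
    innB p (fun x => f x - Pop p K f x) (fun x => f x - Pop p K f x)
      = innB p f f - innB p (Pop p K f) (Pop p K f) := by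
  rw [inn_expand_sub, inn_f_Pop_f hp0 hp1 K hK]
  ring

lemma inn_const_right (hp0 : 0 < p) (hp1 : p < 1) (u : (B → Bool) → ℝ) (e : ℝ) :
    innB p u (fun _ => e) = e * EB p u := by
  unfold innB EB
  rw [Finset.mul_sum]
  apply Finset.sum_congr rfl; intro x _; ring

lemma inn_const_const (hp0 : 0 < p) (hp1 : p < 1) (e e' : ℝ) :
    innB (B := B) p (fun _ => e) (fun _ => e') = e * e' := by
  unfold innB
  have h : ∀ x : B → Bool,
      (fun _ : B → Bool => e) x * (fun _ : B → Bool => e') x * piB p x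
        = e * e' * piB p x := fun x => rfl
  rw [Finset.sum_congr rfl fun x _ => h x, ← Finset.mul_sum, sum_piB hp0 hp1, mul_one]

lemma inn_self_eq_EB_sq (f : (B → Bool) → ℝ) :
    innB p f f = EB p (fun x => f x ^ 2) := by
  unfold innB EB
  apply Finset.sum_congr rfl; intro x _; ring

lemma var_eq_inn (hp0 : 0 < p) (hp1 : p < 1) (f : (B → Bool) → ℝ) :
    VarB p f = innB p (fun x => f x - EB p f) (fun x => f x - EB p f) := by
  rw [inn_expand_sub, inn_const_right hp0 hp1 f (EB p f), inn_const_const hp0 hp1,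
    inn_self_eq_EB_sq]
  unfold VarB
  ring

lemma var_nonneg (hp0 : 0 < p) (hp1 : p < 1) (f : (B → Bool) → ℝ) :
    0 ≤ VarB p f := by
  rw [var_eq_inn hp0 hp1]
  exact inn_self_nonneg hp0 hp1 _

lemma gfun_mean_zero (hp0 : 0 < p) (hp1 : p < 1) (k : ℕ) (hk1 : 1 ≤ k) (c : Finset B → ℝ) :
    ∑ x : B → Bool, gfun p k c x * piB p x = 0 := by
  unfold gfun
  calc ∑ x : B → Bool, (∑ A ∈ filt B k, c A * PsiB p A x) * piB p x
      = ∑ x : B → Bool, ∑ A ∈ filt B k, c A * (PsiB p A x * piB p x) := by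
        apply Finset.sum_congr rfl; intro x _
        rw [Finset.sum_mul]
        apply Finset.sum_congr rfl; intro A _
        ring
    _ = ∑ A ∈ filt B k, c A * (∑ x : B → Bool, PsiB p A x * piB p x) := by
        rw [Finset.sum_comm (s := Finset.univ) (t := filt B k)]
        apply Finset.sum_congr rfl; intro A _
        rw [Finset.mul_sum]
    _ = 0 := by
        apply Finset.sum_eq_zero
        intro A hA
        rw [EB_PsiB hp0 hp1]
        have hAk : A.card = k := (Finset.mem_filter.1 hA).2
        have : A ≠ ∅ := by
          intro h
          rw [h, Finset.card_empty] at hAk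
          omega
        rw [if_neg this, mul_zero]

lemma Pop_sub_const (hp0 : 0 < p) (hp1 : p < 1) (K : (B → Bool) → Finset B)
    (f : (B → Bool) → ℝ) (e : ℝ) :
    Pop p K (fun x => f x - e) = fun x => Pop p K f x - e := by
  funext x
  show ∑ z : B → Bool, (f (patch (K x) x z) - e) * piB p z
      = (∑ z : B → Bool, f (patch (K x) x z) * piB p z) - e
  rw [Finset.sum_congr rfl (fun z _ => sub_mul _ _ _ :
    ∀ z ∈ Finset.univ, (f (patch (K x) x z) - e) * piB p z
      = f (patch (K x) x z) * piB p z - e * piB p z)]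
  rw [Finset.sum_sub_distrib, ← Finset.mul_sum, sum_piB hp0 hp1, mul_one]

/-- per-realization bound -/
lemma main_t (hp0 : 0 < p) (hp1 : p < 1) (K : (B → Bool) → Finset B)
    (hK : ∀ x z, K (patch (K x) x z) = K x)
    (f : (B → Bool) → ℝ) (k : ℕ) (hk1 : 1 ≤ k) (c : Finset B → ℝ) :
    innB p f (gfun p k c)
      ≤ Real.sqrt (innB p f f - innB p (Pop p K f) (Pop p K f))
          * Real.sqrt (∑ A ∈ filt B k, (c A)^2)
        + Real.sqrt (VarB p f)
          * Real.sqrt (innB p (Pop p K (gfun p k c)) (Pop p K (gfun p k c))) := by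
  set g := gfun p k c with hg
  have hdec : innB p f g
      = innB p (fun x => f x - Pop p K f x) g
        + innB p (fun x => Pop p K f x - EB p f) g
        + innB (B := B) p (fun _ => EB p f) g := by
    unfold innB
    rw [← Finset.sum_add_distrib, ← Finset.sum_add_distrib]
    apply Finset.sum_congr rfl; intro x _
    ring
  have hterm3 : innB (B := B) p (fun _ => EB p f) g = 0 := by
    show (∑ x : B → Bool, EB p f * g x * piB p x) = 0
    rw [Finset.sum_congr rfl (fun x _ => mul_assoc _ _ _ :
      ∀ x ∈ Finset.univ, EB p f * g x * piB p x = EB p f * (g x * piB p x))]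
    rw [← Finset.mul_sum, hg, gfun_mean_zero hp0 hp1 k hk1 c, mul_zero]
  have hterm1 : innB p (fun x => f x - Pop p K f x) g
      ≤ Real.sqrt (innB p f f - innB p (Pop p K f) (Pop p K f))
          * Real.sqrt (∑ A ∈ filt B k, (c A)^2) := by
    have h := inn_le_sqrt hp0 hp1 (fun x => f x - Pop p K f x) g
    rw [a_eq hp0 hp1 K hK f] at h
    rw [hg, norm_g hp0 hp1 k c] at h
    exact h
  have hterm2 : innB p (fun x => Pop p K f x - EB p f) g
      ≤ Real.sqrt (VarB p f)
          * Real.sqrt (innB p (Pop p K g) (Pop p K g)) := by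
    have hrw : innB p (fun x => Pop p K f x - EB p f) g
        = innB p (fun x => f x - EB p f) (Pop p K g) := by
      rw [← Pop_sub_const hp0 hp1 K f (EB p f)]
      exact inn_Pop_left K hK _ _
    rw [hrw]
    have h := inn_le_sqrt hp0 hp1 (fun x => f x - EB p f) (Pop p K g)
    rw [← var_eq_inn hp0 hp1 f] at h
    exact h
  calc innB p f g
      = innB p (fun x => f x - Pop p K f x) g
        + innB p (fun x => Pop p K f x - EB p f) g
        + innB (B := B) p (fun _ => EB p f) g := hdec
    _ = innB p (fun x => f x - Pop p K f x) g
        + innB p (fun x => Pop p K f x - EB p f) g := by rw [hterm3, add_zero]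
    _ ≤ _ := add_le_add hterm1 hterm2

lemma var_sum (hp0 : 0 < p) (hp1 : p < 1) (K : (B → Bool) → Finset B)
    (hK : ∀ x z, K (patch (K x) x z) = K x) (f : (B → Bool) → ℝ) :
    ∑ x : B → Bool, piB p x * VarB p (restrict f (K x) x)
      = innB p f f - innB p (Pop p K f) (Pop p K f) := by
  have hvar : ∀ x : B → Bool, VarB p (restrict f (K x) x)
      = Pop p K (fun y => f y * f y) x - (Pop p K f x)^2 := by
    intro x
    unfold VarB
    congr 1
    · show (∑ z : B → Bool, restrict f (K x) x z ^ 2 * piB p z)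
        = ∑ z : B → Bool, (f (patch (K x) x z) * f (patch (K x) x z)) * piB p z
      apply Finset.sum_congr rfl; intro z _
      rw [restrict_apply]
      ring
  rw [Finset.sum_congr rfl fun x _ => by rw [hvar x]]
  rw [Finset.sum_congr rfl (fun x _ => mul_sub _ _ _ :
    ∀ x ∈ Finset.univ, piB p x * (Pop p K (fun y => f y * f y) x - (Pop p K f x)^2)
      = piB p x * Pop p K (fun y => f y * f y) x - piB p x * (Pop p K f x)^2)]
  rw [Finset.sum_sub_distrib]
  congr 1
  · calc ∑ x : B → Bool, piB p x * Pop p K (fun y => f y * f y) x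
        = ∑ x : B → Bool, Pop p K (fun y => f y * f y) x * piB p x := by
          apply Finset.sum_congr rfl; intro x _; ring
      _ = ∑ x : B → Bool, (f x * f x) * piB p x := int_Pop hp0 hp1 K hK _
      _ = innB p f f := by unfold innB; apply Finset.sum_congr rfl; intro x _; ring
  · unfold innB
    apply Finset.sum_congr rfl; intro x _
    ring

/-- averaged Cauchy–Schwarz over the randomness -/
lemma sqrt_avg {T : Type*} [Fintype T] (μ : T → ℝ) (hμ0 : ∀ t, 0 ≤ μ t)
    (hμ1 : ∑ t, μ t = 1) (v : T → ℝ) (hv : ∀ t, 0 ≤ v t) :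
    ∑ t, μ t * Real.sqrt (v t) ≤ Real.sqrt (∑ t, μ t * v t) := by
  have key := Finset.sum_mul_sq_le_sq_mul_sq Finset.univ
    (fun t => Real.sqrt (μ t)) (fun t => Real.sqrt (μ t) * Real.sqrt (v t))
  have e1 : ∀ t, Real.sqrt (μ t) * (Real.sqrt (μ t) * Real.sqrt (v t))
      = μ t * Real.sqrt (v t) := by
    intro t
    rw [← mul_assoc, Real.mul_self_sqrt (hμ0 t)]
  have e2 : ∀ t, (Real.sqrt (μ t))^2 = μ t := fun t => Real.sq_sqrt (hμ0 t)
  have e3 : ∀ t, (Real.sqrt (μ t) * Real.sqrt (v t))^2 = μ t * v t := by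
    intro t
    rw [mul_pow, Real.sq_sqrt (hμ0 t), Real.sq_sqrt (hv t)]
  rw [Finset.sum_congr rfl fun t _ => e1 t, Finset.sum_congr rfl fun t _ => e2 t,
    Finset.sum_congr rfl fun t _ => e3 t, hμ1, one_mul] at key
  have hnn : 0 ≤ ∑ t, μ t * Real.sqrt (v t) :=
    Finset.sum_nonneg fun t _ => mul_nonneg (hμ0 t) (Real.sqrt_nonneg _)
  calc ∑ t, μ t * Real.sqrt (v t)
      = Real.sqrt ((∑ t, μ t * Real.sqrt (v t))^2) := (Real.sqrt_sq hnn).symm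
    _ ≤ Real.sqrt (∑ t, μ t * v t) := Real.sqrt_le_sqrt key

end KL

end SSAux

open SSAux

/-- revealment–predictability theorem, Schramm–Steif: let (T,μ) be a finite
probability space of deterministic query maps J_t on B (J_t(x) is nonempty, and depends
only on the bits of x revealed by J_t(x)), X ∼ π_{p,B} independent of T ∼ μ, and let δ
bound the revealment max_i P(i ∈ J_T(X)). Then for every k ∈ {1,…,|B|},
Σ_{|A|=k} ⟨f,Ψ_A⟩² ≤ 2·E[Var_π(f_{J_T(X)|X})] + 2k·δ·Var_π(f); equivalently, for
non-constant f, P(W_{p,f}=k) ≤ 2ε + 2δk with ε the predictability. -/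
theorem revealment_predictability (p : ℝ) (hp0 : 0 < p) (hp1 : p < 1)
    (B : Type*) [Fintype B] [DecidableEq B] [Nonempty B]
    (f : (B → Bool) → ℝ)
    (T : Type*) [Fintype T] (μ : T → ℝ) (hμ0 : ∀ t, 0 ≤ μ t) (hμ1 : ∑ t, μ t = 1)
    (J : T → (B → Bool) → Finset B)
    (hJne : ∀ t x, (J t x).Nonempty)
    (hJq : ∀ t (x x' : B → Bool), (∀ i ∈ J t x, x' i = x i) → J t x' = J t x)
    (δ : ℝ)
    (hδ : ∀ i : B,
      (∑ t, ∑ x : B → Bool, μ t * piB p x * (if i ∈ J t x then 1 else 0)) ≤ δ)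
    (k : ℕ) (hk : k ∈ Finset.Icc 1 (Fintype.card B)) :
    ∑ A ∈ Finset.univ.filter (fun A : Finset B => A.card = k),
        (innB p f (PsiB p A)) ^ 2
      ≤ 2 * (∑ t, ∑ x : B → Bool, μ t * piB p x * VarB p (restrict f (J t x) x))
        + 2 * (k : ℝ) * δ * VarB p f := by
  classical
  obtain ⟨hk1, -⟩ := Finset.mem_Icc.mp hk
  have hKt : ∀ t, ∀ x z : B → Bool, J t (patch (J t x) x z) = J t x := by
    intro t x z
    exact hJq t x _ (fun i hi => patch_mem _ _ _ hi)
  -- notation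
  let c : Finset B → ℝ := fun A => innB p f (PsiB p A)
  let g : (B → Bool) → ℝ := gfun p k c
  let W : ℝ := ∑ A ∈ filt B k, (c A)^2
  let a : T → ℝ := fun t =>
    innB p f f - innB p (Pop p (J t) f) (Pop p (J t) f)
  let b : T → ℝ := fun t => innB p (Pop p (J t) g) (Pop p (J t) g)
  have hgoal : (∑ A ∈ Finset.univ.filter (fun A : Finset B => A.card = k),
      (innB p f (PsiB p A)) ^ 2) = W := rfl
  rw [hgoal]
  have ha0 : ∀ t, 0 ≤ a t := by
    intro t
    show (0:ℝ) ≤ innB p f f - innB p (Pop p (J t) f) (Pop p (J t) f)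
    rw [← a_eq hp0 hp1 (J t) (hKt t) f]
    exact inn_self_nonneg hp0 hp1 _
  have hb0 : ∀ t, 0 ≤ b t := fun t => inn_self_nonneg hp0 hp1 _
  have hW0 : 0 ≤ W := Finset.sum_nonneg fun A _ => sq_nonneg _
  have hVar0 : 0 ≤ VarB p f := var_nonneg hp0 hp1 f
  have hδ0 : 0 ≤ δ := by
    refine le_trans ?_ (hδ (Classical.arbitrary B))
    apply Finset.sum_nonneg; intro t _
    apply Finset.sum_nonneg; intro x _
    apply mul_nonneg (mul_nonneg (hμ0 t) (piB_nonneg hp0 hp1 x))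
    by_cases h : Classical.arbitrary B ∈ J t x
    · rw [if_pos h]; norm_num
    · rw [if_neg h]
  have hkd0 : (0:ℝ) ≤ (k:ℝ) * δ := mul_nonneg (Nat.cast_nonneg k) hδ0
  have hE0 : 0 ≤ ∑ t, μ t * a t :=
    Finset.sum_nonneg fun t _ => mul_nonneg (hμ0 t) (ha0 t)
  -- step 1
  have hfg : innB p f g = W := inn_f_g k f
  have hstep1 : W ≤ ∑ t, μ t * (Real.sqrt (a t) * Real.sqrt W
      + Real.sqrt (VarB p f) * Real.sqrt (b t)) := by
    calc W = (∑ t, μ t) * W := by rw [hμ1, one_mul]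
      _ = ∑ t, μ t * W := by rw [Finset.sum_mul]
      _ ≤ _ := by
          apply Finset.sum_le_sum
          intro t _
          have hb := main_t hp0 hp1 (J t) (hKt t) f k hk1 c
          calc μ t * W = μ t * innB p f g := by rw [hfg]
            _ ≤ μ t * (Real.sqrt (a t) * Real.sqrt W
                + Real.sqrt (VarB p f) * Real.sqrt (b t)) :=
              mul_le_mul_of_nonneg_left hb (hμ0 t)
  have hstep2 : ∑ t, μ t * (Real.sqrt (a t) * Real.sqrt W
        + Real.sqrt (VarB p f) * Real.sqrt (b t))
      = (∑ t, μ t * Real.sqrt (a t)) * Real.sqrt W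
        + Real.sqrt (VarB p f) * (∑ t, μ t * Real.sqrt (b t)) := by
    rw [Finset.sum_mul, Finset.mul_sum, ← Finset.sum_add_distrib]
    apply Finset.sum_congr rfl; intro t _
    ring
  have havg_a : ∑ t, μ t * Real.sqrt (a t) ≤ Real.sqrt (∑ t, μ t * a t) :=
    sqrt_avg μ hμ0 hμ1 a ha0
  have havg_b : ∑ t, μ t * Real.sqrt (b t) ≤ Real.sqrt (∑ t, μ t * b t) :=
    sqrt_avg μ hμ0 hμ1 b hb0
  -- bound on Σ μ b
  have hbsum : ∑ t, μ t * b t ≤ (k:ℝ) * δ * W := by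
    have hfree : ∀ t, b t + ∑ A ∈ filt B k, (c A)^2 *
        (∑ x : B → Bool, piB p x * (if A ∩ J t x = ∅ then 1 else 0)) ≤ W :=
      fun t => keyLemma hp0 hp1 (J t) (hKt t) k hk1 c
    have h1 : ∑ t, μ t * b t ≤ ∑ t, μ t * (W - ∑ A ∈ filt B k, (c A)^2 *
        (∑ x : B → Bool, piB p x * (if A ∩ J t x = ∅ then 1 else 0))) := by
      apply Finset.sum_le_sum
      intro t _
      exact mul_le_mul_of_nonneg_left (by linarith [hfree t]) (hμ0 t)
    have h2 : ∑ t, μ t * (W - ∑ A ∈ filt B k, (c A)^2 *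
        (∑ x : B → Bool, piB p x * (if A ∩ J t x = ∅ then 1 else 0)))
        = W - ∑ A ∈ filt B k, (c A)^2 *
            (∑ t, μ t * ∑ x : B → Bool, piB p x * (if A ∩ J t x = ∅ then 1 else 0)) := by
      rw [Finset.sum_congr rfl (fun t _ => mul_sub _ _ _ )]
      rw [Finset.sum_sub_distrib, ← Finset.sum_mul, hμ1, one_mul]
      congr 1
      calc ∑ t, μ t * ∑ A ∈ filt B k, (c A)^2 *
            (∑ x : B → Bool, piB p x * (if A ∩ J t x = ∅ then 1 else 0))
          = ∑ t, ∑ A ∈ filt B k, (c A)^2 *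
              (μ t * ∑ x : B → Bool, piB p x * (if A ∩ J t x = ∅ then 1 else 0)) := by
            apply Finset.sum_congr rfl; intro t _
            rw [Finset.mul_sum]
            apply Finset.sum_congr rfl; intro A _
            ring
        _ = ∑ A ∈ filt B k, ∑ t, (c A)^2 *
              (μ t * ∑ x : B → Bool, piB p x * (if A ∩ J t x = ∅ then 1 else 0)) :=
            Finset.sum_comm
        _ = ∑ A ∈ filt B k, (c A)^2 *
              (∑ t, μ t * ∑ x : B → Bool, piB p x * (if A ∩ J t x = ∅ then 1 else 0)) := by
            apply Finset.sum_congr rfl; intro A _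
            rw [Finset.mul_sum]
    have h3 : W - ∑ A ∈ filt B k, (c A)^2 *
        (∑ t, μ t * ∑ x : B → Bool, piB p x * (if A ∩ J t x = ∅ then 1 else 0))
        ≤ (k:ℝ) * δ * W := by
      have hWexp : W - ∑ A ∈ filt B k, (c A)^2 *
          (∑ t, μ t * ∑ x : B → Bool, piB p x * (if A ∩ J t x = ∅ then 1 else 0))
          = ∑ A ∈ filt B k, (c A)^2 *
            (1 - ∑ t, μ t * ∑ x : B → Bool, piB p x * (if A ∩ J t x = ∅ then 1 else 0)) := by
        rw [Finset.sum_congr rfl (fun A _ => mul_sub ((c A)^2) 1 _), Finset.sum_sub_distrib]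
        congr 1
        apply Finset.sum_congr rfl; intro A _
        rw [mul_one]
      rw [hWexp]
      have hkW : (k:ℝ) * δ * W = ∑ A ∈ filt B k, (c A)^2 * ((k:ℝ) * δ) := by
        rw [← Finset.sum_mul]
        ring
      rw [hkW]
      apply Finset.sum_le_sum
      intro A hAf
      apply mul_le_mul_of_nonneg_left _ (sq_nonneg _)
      -- core revealment estimate for a fixed A with |A| = k
      have hcard : A.card = k := (Finset.mem_filter.1 hAf).2
      have e1 : 1 - ∑ t, μ t * ∑ x : B → Bool, piB p x * (if A ∩ J t x = ∅ then 1 else 0)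
          = ∑ t, μ t * ∑ x : B → Bool, piB p x * (if A ∩ J t x = ∅ then 0 else 1) := by
        have : ∀ t, μ t * ∑ x : B → Bool, piB p x * (if A ∩ J t x = ∅ then 0 else 1)
            = μ t - μ t * ∑ x : B → Bool, piB p x * (if A ∩ J t x = ∅ then 1 else 0) := by
          intro t
          have hpt : ∀ x : B → Bool, piB p x * (if A ∩ J t x = ∅ then 0 else 1)
              = piB p x - piB p x * (if A ∩ J t x = ∅ then 1 else 0) := by
            intro x
            by_cases h : A ∩ J t x = ∅
            · rw [if_pos h, if_pos h]; ring
            · rw [if_neg h, if_neg h]; ring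
          have hx : ∑ x : B → Bool, piB p x * (if A ∩ J t x = ∅ then 0 else 1)
              = 1 - ∑ x : B → Bool, piB p x * (if A ∩ J t x = ∅ then 1 else 0) := by
            rw [Finset.sum_congr rfl fun x _ => hpt x, Finset.sum_sub_distrib,
              sum_piB hp0 hp1]
          rw [hx]
          ring
        rw [Finset.sum_congr rfl fun t _ => this t, Finset.sum_sub_distrib, hμ1]
      rw [e1]
      have e2 : ∀ t, μ t * ∑ x : B → Bool, piB p x * (if A ∩ J t x = ∅ then 0 else 1)
          ≤ μ t * ∑ x : B → Bool, piB p x * (∑ j ∈ A, (if j ∈ J t x then 1 else 0)) := by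
        intro t
        apply mul_le_mul_of_nonneg_left _ (hμ0 t)
        apply Finset.sum_le_sum
        intro x _
        apply mul_le_mul_of_nonneg_left _ (piB_nonneg hp0 hp1 x)
        by_cases h : A ∩ J t x = ∅
        · rw [if_pos h]
          apply Finset.sum_nonneg
          intro j _
          by_cases hj : j ∈ J t x
          · rw [if_pos hj]; norm_num
          · rw [if_neg hj]
        · rw [if_neg h]
          obtain ⟨j, hj⟩ := Finset.nonempty_iff_ne_empty.2 h
          have hjA : j ∈ A := (Finset.mem_inter.1 hj).1
          have hjJ : j ∈ J t x := (Finset.mem_inter.1 hj).2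
          calc (1:ℝ) = (if j ∈ J t x then 1 else 0) := by rw [if_pos hjJ]
            _ ≤ ∑ j ∈ A, (if j ∈ J t x then 1 else 0) := by
                apply Finset.single_le_sum _ hjA
                intro i _
                by_cases hi : i ∈ J t x
                · rw [if_pos hi]; norm_num
                · rw [if_neg hi]
      calc ∑ t, μ t * ∑ x : B → Bool, piB p x * (if A ∩ J t x = ∅ then 0 else 1)
          ≤ ∑ t, μ t * ∑ x : B → Bool, piB p x
              * (∑ j ∈ A, (if j ∈ J t x then 1 else 0)) :=
            Finset.sum_le_sum fun t _ => e2 t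
        _ = ∑ t, ∑ x : B → Bool, ∑ j ∈ A,
              μ t * piB p x * (if j ∈ J t x then 1 else 0) := by
            apply Finset.sum_congr rfl; intro t _
            rw [Finset.mul_sum]
            apply Finset.sum_congr rfl; intro x _
            rw [Finset.mul_sum, Finset.mul_sum]
            apply Finset.sum_congr rfl; intro j _
            ring
        _ = ∑ t, ∑ j ∈ A, ∑ x : B → Bool,
              μ t * piB p x * (if j ∈ J t x then 1 else 0) := by
            apply Finset.sum_congr rfl; intro t _
            exact Finset.sum_comm
        _ = ∑ j ∈ A, ∑ t, ∑ x : B → Bool,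
              μ t * piB p x * (if j ∈ J t x then 1 else 0) := Finset.sum_comm
        _ ≤ ∑ j ∈ A, δ := Finset.sum_le_sum fun j _ => hδ j
        _ = (A.card : ℝ) * δ := by rw [Finset.sum_const, nsmul_eq_mul]
        _ = (k:ℝ) * δ := by rw [hcard]
    exact le_trans h1 (le_trans (le_of_eq h2) h3)
  -- epsilon identification
  have hEps : (∑ t, ∑ x : B → Bool, μ t * piB p x * VarB p (restrict f (J t x) x))
      = ∑ t, μ t * a t := by
    apply Finset.sum_congr rfl; intro t _
    calc ∑ x : B → Bool, μ t * piB p x * VarB p (restrict f (J t x) x)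
        = μ t * ∑ x : B → Bool, piB p x * VarB p (restrict f (J t x) x) := by
          rw [Finset.mul_sum]
          apply Finset.sum_congr rfl; intro x _
          ring
      _ = μ t * a t := by rw [var_sum hp0 hp1 (J t) (hKt t) f]
  -- final chain
  have hmain : W ≤ Real.sqrt (∑ t, μ t * a t) * Real.sqrt W
      + Real.sqrt (VarB p f) * Real.sqrt ((k:ℝ) * δ * W) := by
    refine le_trans hstep1 ?_
    rw [hstep2]
    apply add_le_add
    · exact mul_le_mul_of_nonneg_right havg_a (Real.sqrt_nonneg _)
    · apply mul_le_mul_of_nonneg_left _ (Real.sqrt_nonneg _)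
      exact le_trans havg_b (Real.sqrt_le_sqrt hbsum)
  have hsplit : Real.sqrt (VarB p f) * Real.sqrt ((k:ℝ) * δ * W)
      = Real.sqrt (VarB p f * ((k:ℝ) * δ)) * Real.sqrt W := by
    rw [Real.sqrt_mul hkd0 W, ← mul_assoc, ← Real.sqrt_mul hVar0]
  have hs : W ≤ (Real.sqrt (∑ t, μ t * a t)
      + Real.sqrt (VarB p f * ((k:ℝ) * δ))) * Real.sqrt W := by
    rw [add_mul]
    rw [hsplit] at hmain
    exact hmain
  set s : ℝ := Real.sqrt (∑ t, μ t * a t) + Real.sqrt (VarB p f * ((k:ℝ) * δ)) with hsdef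
  have hs0 : 0 ≤ s := add_nonneg (Real.sqrt_nonneg _) (Real.sqrt_nonneg _)
  have hWs : W ≤ s^2 := by
    by_cases h0 : Real.sqrt W = 0
    · have hW00 : W = 0 := by
        have := Real.sqrt_eq_zero (le_refl _) |>.symm
        nlinarith [Real.sq_sqrt hW0, h0]
      rw [hW00]
      positivity
    · have hpos : 0 < Real.sqrt W :=
        lt_of_le_of_ne (Real.sqrt_nonneg _) (Ne.symm h0)
      have h1 : Real.sqrt W * Real.sqrt W ≤ s * Real.sqrt W := by
        rw [Real.mul_self_sqrt hW0]
        exact hs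
      have h2 : Real.sqrt W ≤ s := le_of_mul_le_mul_right h1 hpos
      calc W = Real.sqrt W * Real.sqrt W := (Real.mul_self_sqrt hW0).symm
        _ ≤ s * s := mul_le_mul h2 h2 (Real.sqrt_nonneg _) hs0
        _ = s^2 := (sq s).symm
  have hfinal : s^2 ≤ 2 * (∑ t, μ t * a t) + 2 * (k:ℝ) * δ * VarB p f := by
    have hsq1 : (Real.sqrt (∑ t, μ t * a t))^2 = ∑ t, μ t * a t := Real.sq_sqrt hE0
    have hsq2 : (Real.sqrt (VarB p f * ((k:ℝ) * δ)))^2 = VarB p f * ((k:ℝ) * δ) :=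
      Real.sq_sqrt (mul_nonneg hVar0 hkd0)
    rw [hsdef]
    nlinarith [sq_nonneg (Real.sqrt (∑ t, μ t * a t)
      - Real.sqrt (VarB p f * ((k:ℝ) * δ)))]
  rw [hEps]
  exact le_trans hWs hfinal

end
end

section
/- Let B be a nonempty finite set, let π be any positive product probability measure on S^B, and let J be a query map on B. Then for all functions g, h : S^B → ℝ: E_{x∼π}[⟨g_{J(x)|x}, h_{J(x)|x}⟩_π] = ⟨g, h⟩_π, where ⟨u,v⟩_π = Σ_{z∈S^B} u(z)v(z)π(z). -/
open Finset

noncomputable section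

/-- for any positive product probability measure π on S^B (encoded by
weights w i b > 0 with w i true + w i false = 1) and any query map J on B,
E_{x∼π}[⟨g_{J(x)|x}, h_{J(x)|x}⟩_π] = ⟨g,h⟩_π. -/
theorem expectation_of_random_inner_product
    (B : Type*) [Fintype B] [DecidableEq B] [Nonempty B]
    (w : B → Bool → ℝ) (hw : ∀ i b, 0 < w i b) (hw1 : ∀ i, w i true + w i false = 1)
    (J : (B → Bool) → Finset B)
    (hJne : ∀ x, (J x).Nonempty)
    (hJq : ∀ (x x' : B → Bool), (∀ i ∈ J x, x' i = x i) → J x' = J x)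
    (g h : (B → Bool) → ℝ) :
    ∑ x : B → Bool, (∏ i, w i (x i)) *
        (∑ z : B → Bool, restrict g (J x) x z * restrict h (J x) x z * ∏ i, w i (z i))
      = ∑ z : B → Bool, g z * h z * ∏ i, w i (z i) := by
  classical
  have key : ∀ x z : B → Bool, J (fun j => if j ∈ J x then x j else z j) = J x := by
    intro x z
    apply hJq
    intro i hi
    simp [hi]
  set φ : ((B → Bool) × (B → Bool)) → ((B → Bool) × (B → Bool)) :=
    fun p => (fun j => if j ∈ J p.1 then p.1 j else p.2 j,
              fun j => if j ∈ J p.1 then p.2 j else p.1 j) with hφ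
  have hinv : Function.Involutive φ := by
    intro p
    have hJ := key p.1 p.2
    simp only [hφ, hJ]
    ext j <;> by_cases hj : j ∈ J p.1 <;> simp [hj]
  have hbij := hinv.bijective
  have F := fun p : (B → Bool) × (B → Bool) =>
    (∏ i, w i (p.1 i)) * (restrict g (J p.1) p.1 p.2 * restrict h (J p.1) p.1 p.2
      * ∏ i, w i (p.2 i))
  calc
    ∑ x : B → Bool, (∏ i, w i (x i)) *
        (∑ z : B → Bool, restrict g (J x) x z * restrict h (J x) x z * ∏ i, w i (z i))
      = ∑ p : (B → Bool) × (B → Bool), (∏ i, w i (p.1 i)) *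
          (restrict g (J p.1) p.1 p.2 * restrict h (J p.1) p.1 p.2 * ∏ i, w i (p.2 i)) := by
        rw [Fintype.sum_prod_type]
        simp [Finset.mul_sum]
    _ = ∑ p : (B → Bool) × (B → Bool), (∏ i, w i (p.1 i)) *
          (g p.1 * h p.1 * ∏ i, w i (p.2 i)) := by
        apply Fintype.sum_bijective φ hbij
        intro p
        have hprod : (∏ i, w i (p.1 i)) * (∏ i, w i (p.2 i))
            = (∏ i, w i ((φ p).1 i)) * (∏ i, w i ((φ p).2 i)) := by
          rw [← Finset.prod_mul_distrib, ← Finset.prod_mul_distrib]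
          apply Finset.prod_congr rfl
          intro i _
          by_cases hi : i ∈ J p.1 <;> simp [hφ, hi, mul_comm]
        have hrg : restrict g (J p.1) p.1 p.2 = g (φ p).1 := rfl
        have hrh : restrict h (J p.1) p.1 p.2 = h (φ p).1 := rfl
        rw [hrg, hrh]
        rw [show (∏ i, w i (p.1 i)) * (g (φ p).1 * h (φ p).1 * ∏ i, w i (p.2 i))
            = g (φ p).1 * h (φ p).1 * ((∏ i, w i (p.1 i)) * ∏ i, w i (p.2 i)) from by ring,
          hprod]
        ring
    _ = (∑ x : B → Bool, g x * h x * ∏ i, w i (x i)) * (∑ z : B → Bool, ∏ i, w i (z i)) := by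
        rw [Fintype.sum_prod_type, Finset.sum_mul]
        apply Finset.sum_congr rfl
        intro x _
        rw [Finset.mul_sum]
        apply Finset.sum_congr rfl
        intro z _
        ring
    _ = ∑ z : B → Bool, g z * h z * ∏ i, w i (z i) := by
        have h1 : (∑ z : B → Bool, ∏ i, w i (z i)) = ∏ i, (∑ b : Bool, w i b) := by
          rw [Finset.prod_univ_sum, Fintype.piFinset_univ]
        have h2 : (∏ i, (∑ b : Bool, w i b)) = 1 := by
          apply Finset.prod_eq_one
          intro i _
          rw [Fintype.sum_bool, hw1]
        rw [h1, h2, mul_one]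

end
end

section
/- Let n > 1 be an integer, let W be a random variable taking values in {1, …, n}, and suppose there are constants ε ≥ 0 and δ > 0 such that P(W = k) ≤ 2ε + 2δk for all k ∈ {1, …, n}. Then: (a) n·E[W^{−1}] − 1/2 ≤ 5·n·log(n)·ε + 3·n·√δ; and (b) for every real t > 0, E[(1 − W/n)^{⌈nt⌉}] ≤ 2(ε/t + δ/t²). -/
open Finset

/-!
Both bounds are sums against the law `p k = P(W = k) ≤ 2ε + 2δk`. For (a), split `E[W⁻¹]` at
the cutoff `m = ⌊δ^{-1/2}⌋`: the terms `k ≤ m` contribute at most `2ε H_n + 2δm ≤ 2ε H_n + 2√δ`,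
the terms `k > m` at most `1/(m+1) ≤ √δ`; then `H_n ≤ 1 + log n` and `log n ≥ log 2 > 2/3`.
For (b), `(1 - k/n)^⌈nt⌉ ≤ e^{-tk}`, and summing `(2ε + 2δk) e^{-tk}` over `k ≥ 1` gives
`2ε/(e^t - 1) + 2δ e^t/(e^t - 1)² ≤ 2ε/t + 2δ/t²`, the second because
`e^{t/2} - e^{-t/2} = 2 sinh (t/2) ≥ t`.
-/

lemma sum_mul_comp_eq_sum_fiber {Ω : Type*} [Fintype Ω] (w : Ω → ℝ) (W : Ω → ℕ)
    {s : Finset ℕ} (hW : ∀ ω, W ω ∈ s) (g : ℕ → ℝ) :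
    ∑ ω, w ω * g (W ω) = ∑ k ∈ s, (∑ ω, if W ω = k then w ω else 0) * g k := by
  rw [← sum_fiberwise_of_maps_to (fun ω _ => hW ω)]
  refine sum_congr rfl fun k _ => ?_
  rw [← sum_filter, sum_mul]
  exact sum_congr rfl fun ω hω => by rw [(mem_filter.mp hω).2]

lemma sum_Icc_inv_le_one_add_log (n : ℕ) :
    ∑ k ∈ Icc 1 n, (k : ℝ)⁻¹ ≤ 1 + Real.log n := by
  simpa only [harmonic_eq_sum_Icc, Rat.cast_sum, Rat.cast_inv, Rat.cast_natCast]
    using harmonic_le_one_add_log n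

lemma sum_mul_inv_le_of_le_add_mul {p : ℕ → ℝ} {n : ℕ} {a b : ℝ} (hp : ∀ k, 0 ≤ p k)
    (hp1 : ∑ k ∈ Icc 1 n, p k ≤ 1) (ha : 0 ≤ a) (hb : 0 ≤ b)
    (hP : ∀ k ∈ Icc 1 n, p k ≤ a + b * k) (m : ℕ) :
    ∑ k ∈ Icc 1 n, p k * (k : ℝ)⁻¹ ≤ a * (1 + Real.log n) + b * m + ((m : ℝ) + 1)⁻¹ := by
  have hterm : ∀ k ∈ Icc 1 n,
      p k * (k : ℝ)⁻¹ ≤ a * (k : ℝ)⁻¹ + (if k ≤ m then b else 0) + p k * ((m : ℝ) + 1)⁻¹ := by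
    intro k hk
    have hk1 : (1 : ℝ) ≤ k := by exact_mod_cast (mem_Icc.mp hk).1
    have hpm : 0 ≤ p k * ((m : ℝ) + 1)⁻¹ := mul_nonneg (hp k) (by positivity)
    split_ifs with hkm
    · calc p k * (k : ℝ)⁻¹ ≤ (a + b * k) * (k : ℝ)⁻¹ := by gcongr; exact hP k hk
        _ = a * (k : ℝ)⁻¹ + b := by field_simp
        _ ≤ _ := by linarith
    · have hmk : (m : ℝ) + 1 ≤ k := by exact_mod_cast Nat.lt_of_not_le hkm
      have : p k * (k : ℝ)⁻¹ ≤ p k * ((m : ℝ) + 1)⁻¹ := by gcongr; exact hp k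
      have : 0 ≤ a * (k : ℝ)⁻¹ := by positivity
      linarith
  have hcount : ∑ k ∈ Icc 1 n, (if k ≤ m then b else 0) ≤ b * m := by
    rw [← sum_filter, sum_const, nsmul_eq_mul, mul_comm]
    gcongr
    calc #{k ∈ Icc 1 n | k ≤ m} ≤ #(Icc 1 m) :=
          card_le_card fun k hk => by simp only [mem_filter, mem_Icc] at hk ⊢; omega
      _ = m := by simp
  calc ∑ k ∈ Icc 1 n, p k * (k : ℝ)⁻¹
      ≤ ∑ k ∈ Icc 1 n, (a * (k : ℝ)⁻¹ + (if k ≤ m then b else 0) + p k * ((m : ℝ) + 1)⁻¹) :=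
        sum_le_sum hterm
    _ = a * ∑ k ∈ Icc 1 n, (k : ℝ)⁻¹ + ∑ k ∈ Icc 1 n, (if k ≤ m then b else 0)
          + (∑ k ∈ Icc 1 n, p k) * ((m : ℝ) + 1)⁻¹ := by
        rw [sum_add_distrib, sum_add_distrib, mul_sum, sum_mul]
    _ ≤ a * (1 + Real.log n) + b * m + 1 * ((m : ℝ) + 1)⁻¹ := by
        gcongr
        exact sum_Icc_inv_le_one_add_log n
    _ = _ := by rw [one_mul]

lemma sum_mul_inv_le_of_le_two_mul_add {p : ℕ → ℝ} {n : ℕ} {ε δ : ℝ} (hp : ∀ k, 0 ≤ p k)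
    (hp1 : ∑ k ∈ Icc 1 n, p k ≤ 1) (hε : 0 ≤ ε) (hδ : 0 < δ)
    (hP : ∀ k ∈ Icc 1 n, p k ≤ 2 * ε + 2 * δ * k) :
    ∑ k ∈ Icc 1 n, p k * (k : ℝ)⁻¹ ≤ 2 * ε * (1 + Real.log n) + 3 * Real.sqrt δ := by
  set m := ⌊(Real.sqrt δ)⁻¹⌋₊
  have hs : 0 < Real.sqrt δ := Real.sqrt_pos.mpr hδ
  have hm_le : (m : ℝ) ≤ (Real.sqrt δ)⁻¹ := Nat.floor_le (by positivity)
  have hm_gt : (Real.sqrt δ)⁻¹ < (m : ℝ) + 1 := Nat.lt_floor_add_one _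
  have hδm : 2 * δ * m ≤ 2 * Real.sqrt δ := by
    calc 2 * δ * m ≤ 2 * δ * (Real.sqrt δ)⁻¹ := by gcongr
      _ = 2 * Real.sqrt δ := by rw [mul_assoc, ← div_eq_mul_inv, Real.div_sqrt]
  have htail : ((m : ℝ) + 1)⁻¹ ≤ Real.sqrt δ := by
    rw [inv_le_comm₀ (by positivity) hs]; exact hm_gt.le
  have := sum_mul_inv_le_of_le_add_mul hp hp1 (by positivity) (by positivity) hP m
  linarith

lemma exp_neg_div_one_sub_exp_neg_le {t : ℝ} (ht : 0 < t) :
    Real.exp (-t) / (1 - Real.exp (-t)) ≤ 1 / t := by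
  have hlt : Real.exp (-t) < 1 := Real.exp_lt_one_iff.mpr (by linarith)
  rw [div_le_div_iff₀ (by linarith) ht, one_mul]
  calc Real.exp (-t) * t = Real.exp (-t) * (t + 1) - Real.exp (-t) := by ring
    _ ≤ Real.exp (-t) * Real.exp t - Real.exp (-t) := by gcongr; exact Real.add_one_le_exp t
    _ = 1 - Real.exp (-t) := by rw [← Real.exp_add, neg_add_cancel, Real.exp_zero]

lemma exp_neg_div_one_sub_exp_neg_sq_le {t : ℝ} (ht : 0 < t) :
    Real.exp (-t) / (1 - Real.exp (-t)) ^ 2 ≤ 1 / t ^ 2 := by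
  have hlt : Real.exp (-t) < 1 := Real.exp_lt_one_iff.mpr (by linarith)
  have hfactor : 1 - Real.exp (-t) = Real.exp (-(t / 2)) * (2 * Real.sinh (t / 2)) := by
    rw [Real.sinh_eq, mul_div_cancel₀ _ two_ne_zero, mul_sub, ← Real.exp_add, ← Real.exp_add]
    ring_nf
    simp only [Real.exp_zero]
    ring
  have hsinh : t ≤ 2 * Real.sinh (t / 2) := by
    linarith [Real.self_le_sinh_iff.mpr (by linarith : 0 ≤ t / 2)]
  have hsq : Real.exp (-(t / 2)) ^ 2 = Real.exp (-t) := by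
    rw [← Real.exp_nat_mul]; ring_nf
  rw [div_le_div_iff₀ (by nlinarith) (by positivity), one_mul, hfactor, mul_pow, hsq]
  gcongr

lemma sum_mul_exp_neg_pow_le {p : ℕ → ℝ} {n : ℕ} {a b t : ℝ} (ha : 0 ≤ a) (hb : 0 ≤ b)
    (ht : 0 < t) (hP : ∀ k ∈ Icc 1 n, p k ≤ a + b * k) :
    ∑ k ∈ Icc 1 n, p k * Real.exp (-t) ^ k ≤ a / t + b / t ^ 2 := by
  set r := Real.exp (-t)
  have hr0 : 0 ≤ r := (Real.exp_pos _).le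
  have hr1 : r < 1 := Real.exp_lt_one_iff.mpr (by linarith)
  have hgeom : ∑ k ∈ Icc 1 n, r ^ k ≤ r / (1 - r) := by
    have := geom_sum_Ico_le_of_lt_one (m := 1) (n := n + 1) hr0 hr1
    rwa [Finset.Ico_add_one_right_eq_Icc, pow_one] at this
  have harith : ∑ k ∈ Icc 1 n, (k : ℝ) * r ^ k ≤ r / (1 - r) ^ 2 :=
    sum_le_hasSum _ (fun k _ => by positivity)
      (hasSum_coe_mul_geometric_of_norm_lt_one (by rwa [Real.norm_of_nonneg hr0]))
  calc ∑ k ∈ Icc 1 n, p k * r ^ k ≤ ∑ k ∈ Icc 1 n, (a + b * k) * r ^ k :=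
        sum_le_sum fun k hk => by gcongr; exact hP k hk
    _ = a * ∑ k ∈ Icc 1 n, r ^ k + b * ∑ k ∈ Icc 1 n, (k : ℝ) * r ^ k := by
        rw [mul_sum, mul_sum, ← sum_add_distrib]
        exact sum_congr rfl fun k _ => by ring
    _ ≤ a * (1 / t) + b * (1 / t ^ 2) := by
        gcongr
        exacts [hgeom.trans (exp_neg_div_one_sub_exp_neg_le ht),
          harith.trans (exp_neg_div_one_sub_exp_neg_sq_le ht)]
    _ = a / t + b / t ^ 2 := by ring

lemma one_sub_div_pow_le_exp_neg_pow {n k N : ℕ} {t : ℝ} (hkn : k ≤ n) (hN : n * t ≤ N) :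
    (1 - (k : ℝ) / n) ^ N ≤ Real.exp (-t) ^ k := by
  rcases Nat.eq_zero_or_pos n with rfl | hn
  · obtain rfl : k = 0 := Nat.le_zero.mp hkn
    simp
  have hn' : (0 : ℝ) < n := by exact_mod_cast hn
  have hbase : 0 ≤ 1 - (k : ℝ) / n := by
    rw [sub_nonneg, div_le_one hn']; exact_mod_cast hkn
  calc (1 - (k : ℝ) / n) ^ N ≤ Real.exp (-(k / n)) ^ N := by
        gcongr; exact Real.one_sub_le_exp_neg _
    _ = Real.exp (-(k / n * N)) := by rw [← Real.exp_nat_mul]; ring_nf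
    _ ≤ Real.exp (-(k * t)) := by
        rw [Real.exp_le_exp, neg_le_neg_iff]
        calc (k : ℝ) * t = k / n * (n * t) := by field_simp
          _ ≤ k / n * N := by gcongr
    _ = Real.exp (-t) ^ k := by rw [← Real.exp_nat_mul]; ring_nf

/-- let n > 1 and let W be a random variable on a finite probability space
taking values in {1,…,n}, with P(W = k) ≤ 2ε + 2δk for all k ∈ {1,…,n}, where ε ≥ 0 and
δ > 0. Then (a) n·E[W⁻¹] − 1/2 ≤ 5n log(n) ε + 3n √δ, and (b) for every real t > 0,
E[(1 − W/n)^{⌈nt⌉}] ≤ 2(ε/t + δ/t²). -/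
theorem revealment_predictability_corollary (n : ℕ) (hn : 1 < n)
    (Ω : Type*) [Fintype Ω] (w : Ω → ℝ) (hw : ∀ ω, 0 ≤ w ω) (hw1 : ∑ ω, w ω = 1)
    (W : Ω → ℕ) (hW : ∀ ω, W ω ∈ Finset.Icc 1 n)
    (ε δ : ℝ) (hε : 0 ≤ ε) (hδ : 0 < δ)
    (hP : ∀ k ∈ Finset.Icc 1 n,
      (∑ ω, if W ω = k then w ω else 0) ≤ 2 * ε + 2 * δ * (k : ℝ)) :
    (n : ℝ) * (∑ ω, w ω * ((W ω : ℝ))⁻¹) - 1 / 2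
        ≤ 5 * (n : ℝ) * Real.log n * ε + 3 * (n : ℝ) * Real.sqrt δ
    ∧ ∀ t : ℝ, 0 < t →
        (∑ ω, w ω * (1 - (W ω : ℝ) / (n : ℝ)) ^ ⌈(n : ℝ) * t⌉₊)
          ≤ 2 * (ε / t + δ / t ^ 2) := by
  set p : ℕ → ℝ := fun k => ∑ ω, if W ω = k then w ω else 0
  have hp : ∀ k, 0 ≤ p k := fun k => sum_nonneg fun ω _ => by split_ifs <;> simp [hw ω]
  have hp1 : ∑ k ∈ Icc 1 n, p k = 1 := by
    simpa [hw1] using (sum_mul_comp_eq_sum_fiber w W hW fun _ => 1).symm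
  refine ⟨?_, fun t ht => ?_⟩
  · have hE := sum_mul_inv_le_of_le_two_mul_add hp hp1.le hε hδ hP
    rw [← sum_mul_comp_eq_sum_fiber w W hW] at hE
    have hlog : 2 / 3 ≤ Real.log n := by
      have : Real.log 2 ≤ Real.log n := Real.log_le_log two_pos (by exact_mod_cast hn)
      linarith [Real.log_two_gt_d9]
    have hn0 : (0 : ℝ) ≤ n := n.cast_nonneg
    nlinarith [mul_le_mul_of_nonneg_left hE hn0,
      mul_nonneg (mul_nonneg hn0 hε) (by linarith : (0 : ℝ) ≤ 3 * Real.log n - 2)]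
  · calc ∑ ω, w ω * (1 - (W ω : ℝ) / n) ^ ⌈(n : ℝ) * t⌉₊
        ≤ ∑ ω, w ω * Real.exp (-t) ^ W ω := sum_le_sum fun ω _ => by
          gcongr
          · exact hw ω
          · exact one_sub_div_pow_le_exp_neg_pow (mem_Icc.mp (hW ω)).2 (Nat.le_ceil _)
      _ = ∑ k ∈ Icc 1 n, p k * Real.exp (-t) ^ k := sum_mul_comp_eq_sum_fiber w W hW _
      _ ≤ 2 * ε / t + 2 * δ / t ^ 2 := sum_mul_exp_neg_pow_le (by positivity) (by positivity) ht hP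
      _ = 2 * (ε / t + δ / t ^ 2) := by ring
end
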